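/- If z_1 = 0, z_2 = 1, z_3 = 2 and z_4,…,z_l are arbitrary, then the Euler operator E = X∂ does not lie in the subalgebra of differential operators on ℂ* generated by X and L = X^{-1}(E−z_1)⋯(E−z_l). Specifically, on the 2-dimensional module V = ℂ[X]/(X²), L acts by 0 and X acts nilpotently, so every element of the subalgebra generated by L and X acts on V with a single eigenvalue, while E acts with eigenvalues 0 and 1. -/

import Mathlib

/-! With respect to the flag `ℂ[X] ⊃ X ℂ[X] ⊃ X² ℂ[X]`, both `X` and `L` are strictly
triangular: `X` raises degrees, and since `z₁, z₂, z₃ = 0, 1, 2` the operator `L` kills `1, X, X²`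
and lowers every other `X^n` by one, so it maps `ℂ[X]` into `X² ℂ[X]`. Operators acting on the
two graded pieces of the flag by one and the same scalar form a subalgebra, which therefore
contains the algebra generated by `X` and `L`; but `E` acts on these pieces by `0` and `1`. -/

noncomputable section

abbrev ExpMod := ℂ →₀ ℂ

noncomputable def Xop : Module.End ℂ ExpMod := Finsupp.lmapDomain ℂ ℂ (fun u => u + 1)

noncomputable def Xinv : Module.End ℂ ExpMod := Finsupp.lmapDomain ℂ ℂ (fun u => u - 1)

noncomputable def Dop : Module.End ℂ ExpMod :=
  Finsupp.lsum ℂ (fun u => LinearMap.toSpanSingleton ℂ ExpMod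
    (u • Finsupp.single (u - 1) (1 : ℂ)))

noncomputable def Eop : Module.End ℂ ExpMod := Xop * Dop

noncomputable def Lop (l : ℕ) (z : Fin l → ℂ) : Module.End ℂ ExpMod :=
  Xinv * ((List.ofFn (fun i : Fin l => Eop - z i • (1 : Module.End ℂ ExpMod))).prod)

section GradedScalar

variable {R M : Type*} [CommRing R] [AddCommGroup M] [Module R M]

def gradedScalarSubalgebra (F : ℕ → Submodule R M) (hF : Antitone F) :
    Subalgebra R (Module.End R M) where
  carrier := {P | ∃ c : R, ∀ m, F m ≤ (F (m + 1)).comap (P - algebraMap R _ c)}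
  mul_mem' := by
    rintro P Q ⟨c, hP⟩ ⟨d, hQ⟩
    have hP_le (m : ℕ) : F m ≤ (F m).comap P := fun v hv => by
      simpa using add_mem (hF m.le_succ (hP m hv)) ((F m).smul_mem c hv)
    refine ⟨c * d, fun m v hv => ?_⟩
    have hsplit : (P * Q - algebraMap R _ (c * d)) v
        = P ((Q - algebraMap R _ d) v) + d • (P - algebraMap R _ c) v := by
      simp only [LinearMap.sub_apply, Module.End.mul_apply, Module.algebraMap_end_apply, map_sub,
        map_smul]
      module
    rw [Submodule.mem_comap, hsplit]
    exact add_mem (hP_le _ (hQ m hv)) ((F (m + 1)).smul_mem d (hP m hv))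
  add_mem' := by
    rintro P Q ⟨c, hP⟩ ⟨d, hQ⟩
    refine ⟨c + d, fun m v hv => ?_⟩
    have hsplit : (P + Q - algebraMap R _ (c + d)) v
        = (P - algebraMap R _ c) v + (Q - algebraMap R _ d) v := by
      simp only [LinearMap.sub_apply, LinearMap.add_apply, Module.algebraMap_end_apply, add_smul]
      abel
    rw [Submodule.mem_comap, hsplit]
    exact add_mem (hP m hv) (hQ m hv)
  algebraMap_mem' r := ⟨r, fun m v _ => by simp⟩

end GradedScalar

lemma Module.End.list_prod_map_sub_smul_one_apply {R M : Type*} [CommRing R] [AddCommGroup M]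
    [Module R M] {T : Module.End R M} {v : M} {a : R} (hv : T v = a • v) (ws : List R) :
    (ws.map fun w => T - w • 1).prod v = (ws.map fun w => a - w).prod • v := by
  induction ws with
  | nil => simp
  | cons w ws ih =>
    simp only [List.map_cons, List.prod_cons, Module.End.mul_apply, ih, map_smul,
      LinearMap.sub_apply, LinearMap.smul_apply, Module.End.one_apply, hv, smul_smul, ← sub_smul]
    rw [mul_comm]

open Finsupp

lemma Xop_single (u : ℂ) : Xop (single u 1) = single (u + 1) 1 := by
  simp [Xop]

lemma Xinv_single (u : ℂ) : Xinv (single u 1) = single (u - 1) 1 := by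
  simp [Xinv]

lemma Eop_single (u : ℂ) : Eop (single u 1) = u • single u 1 := by
  have hD : Dop (single u 1) = u • single (u - 1) 1 := by
    simp [Dop, LinearMap.toSpanSingleton_apply]
  rw [Eop, Module.End.mul_apply, hD, map_smul, Xop_single, sub_add_cancel]

lemma Lop_single (l : ℕ) (z : Fin l → ℂ) (u : ℂ) :
    Lop l z (single u 1) = (∏ i, (u - z i)) • single (u - 1) 1 := by
  have hprod := Module.End.list_prod_map_sub_smul_one_apply (Eop_single u) (List.ofFn z)
  simp only [List.map_ofFn, Function.comp_def, List.prod_ofFn] at hprod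
  rw [Lop, Module.End.mul_apply, hprod, map_smul, Xinv_single]

/-- `X^m ℂ[X]`. -/
def monomialSpan (m : ℕ) : Submodule ℂ ExpMod :=
  supported ℂ ℂ ((Nat.cast : ℕ → ℂ) '' Set.Ici m)

lemma single_mem_monomialSpan {m n : ℕ} (h : m ≤ n) (a : ℂ) :
    single (n : ℂ) a ∈ monomialSpan m :=
  single_mem_supported ℂ a ⟨n, h, rfl⟩

lemma monomialSpan_antitone : Antitone monomialSpan :=
  fun _ _ h => supported_mono (Set.image_mono (Set.Ici_subset_Ici.mpr h))

lemma apply_eq_zero_of_mem_monomialSpan {m k : ℕ} (hk : k < m) {v : ExpMod}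
    (hv : v ∈ monomialSpan m) : v k = 0 :=
  (mem_supported' ℂ v).mp hv k fun ⟨n, hn, hnk⟩ => by
    have : n = k := by exact_mod_cast hnk
    exact absurd hn (by simp only [Set.mem_Ici]; omega)

lemma monomialSpan_le_comap {T : Module.End ℂ ExpMod} {m : ℕ} {N : Submodule ℂ ExpMod}
    (h : ∀ n : ℕ, m ≤ n → T (single (n : ℂ) 1) ∈ N) : monomialSpan m ≤ N.comap T := by
  rw [monomialSpan, supported_eq_span_single, Submodule.span_le, Set.image_image]
  rintro _ ⟨n, hn, rfl⟩
  exact h n hn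

lemma Lop_single_mem_monomialSpan_two {l : ℕ} (hl : 3 ≤ l) (z : Fin l → ℂ)
    (hz : ∀ k : Fin l, (k : ℕ) < 3 → z k = k) (n : ℕ) :
    Lop l z (single (n : ℂ) 1) ∈ monomialSpan 2 := by
  rw [Lop_single]
  rcases Nat.lt_or_ge n 3 with hn | hn
  · rw [Finset.prod_eq_zero (Finset.mem_univ ⟨n, by omega⟩) (by rw [hz _ hn, sub_self]), zero_smul]
    exact zero_mem _
  · have hcast : (n : ℂ) - 1 = ((n - 1 : ℕ) : ℂ) := by
      rw [Nat.cast_sub (by omega), Nat.cast_one]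
    rw [hcast]
    exact Submodule.smul_mem _ _ (single_mem_monomialSpan (by omega) 1)

/-- The flag `ℂ[X] ⊃ X ℂ[X] ⊃ X² ℂ[X] ⊃ X² ℂ[X] ⊃ ⋯`; its two nonzero graded pieces are the
lines of `V = ℂ[X]/(X²)` spanned by `1` and `X`. -/
def flagV (m : ℕ) : Submodule ℂ ExpMod := monomialSpan (min m 2)

lemma flagV_antitone : Antitone flagV :=
  fun _ _ h => monomialSpan_antitone (min_le_min_right 2 h)

lemma Xop_mem_gradedScalarSubalgebra : Xop ∈ gradedScalarSubalgebra flagV flagV_antitone := by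
  refine ⟨0, fun m => monomialSpan_le_comap fun n hn => ?_⟩
  rw [map_zero, LinearMap.sub_apply, LinearMap.zero_apply, sub_zero, Xop_single]
  exact_mod_cast single_mem_monomialSpan (by omega) 1

lemma Lop_mem_gradedScalarSubalgebra {l : ℕ} (hl : 3 ≤ l) (z : Fin l → ℂ)
    (hz : ∀ k : Fin l, (k : ℕ) < 3 → z k = k) :
    Lop l z ∈ gradedScalarSubalgebra flagV flagV_antitone := by
  refine ⟨0, fun m => monomialSpan_le_comap fun n _ => ?_⟩
  rw [map_zero, LinearMap.sub_apply, LinearMap.zero_apply, sub_zero]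
  exact monomialSpan_antitone (min_le_right _ _) (Lop_single_mem_monomialSpan_two hl z hz n)

lemma Eop_notMem_gradedScalarSubalgebra : Eop ∉ gradedScalarSubalgebra flagV flagV_antitone := by
  rintro ⟨c, hc⟩
  have hc0 : c = 0 := by
    have h := apply_eq_zero_of_mem_monomialSpan zero_lt_one
      (hc 0 (single_mem_monomialSpan (le_refl 0) 1))
    simpa [Module.algebraMap_end_apply, Eop_single] using h
  have hc1 : 1 - c = 0 := by
    have h := apply_eq_zero_of_mem_monomialSpan one_lt_two
      (hc 1 (single_mem_monomialSpan (le_refl 1) 1))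
    simpa [Module.algebraMap_end_apply, Eop_single, sub_smul] using h
  simp [hc0] at hc1

theorem statement1 (l : ℕ) (hl : 3 ≤ l) (z : Fin l → ℂ)
    (h0 : z ⟨0, by omega⟩ = 0) (h1 : z ⟨1, by omega⟩ = 1) (h2 : z ⟨2, by omega⟩ = 2) :
    Eop ∉ Algebra.adjoin ℂ {Xop, Lop l z} := by
  have hz : ∀ k : Fin l, (k : ℕ) < 3 → z k = k := by
    rintro ⟨k, hk⟩ hk3
    interval_cases k
    exacts [by simpa using h0, by simpa using h1, by simpa using h2]
  have hle : Algebra.adjoin ℂ {Xop, Lop l z} ≤ gradedScalarSubalgebra flagV flagV_antitone := by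
    refine Algebra.adjoin_le ?_
    rintro P (rfl | rfl)
    · exact Xop_mem_gradedScalarSubalgebra
    · exact Lop_mem_gradedScalarSubalgebra hl z hz
  exact fun hE => Eop_notMem_gradedScalarSubalgebra (hle hE)

end
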